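/- If the recursively defined sets G_k^d satisfy ⟨P_{G_k^d}, X_1 P_{G_{k+1}^d}⟩ = 2k+1 (i.e., the number of pairs (a,b) ∈ G_k^d × G_{k+1}^d with b = a ⊕ e_1 is 2k+1), then this property propagates: ⟨P_{G_{2k}^{d+1}}, X_1 P_{G_{2k+1}^{d+1}}⟩ = 4k+1 and ⟨P_{G_{2k-1}^{d+1}}, X_1 P_{G_{2k}^{d+1}}⟩ = 4k−1. -/
import Mathlib


/-- Vertices of the hypercube `Q_d`. -/
abbrev Vtx (d : ℕ) := Fin d → ZMod 2

/-- The `i`-th standard basis vector of `(ZMod 2)^d`. -/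
def eV {d : ℕ} (i : Fin d) : Vtx d := Pi.single i 1

/-- The number of edges of `Q_d` in direction `i` whose two endpoints both lie
in `S`, i.e. the number of pairs `{t, t ⊕ e_i} ⊆ S`. -/
def edgeCount {d : ℕ} (S : Finset (Vtx d)) (i : Fin d) : ℕ :=
  (S.filter fun t => t i = 0 ∧ t + eV i ∈ S).card

/-- `S ⊆ Q_d` is a `(d,m)`-edge equitable design: exactly `m` edges of the
induced subgraph in each direction. -/
def Equitable {d : ℕ} (S : Finset (Vtx d)) (m : ℕ) : Prop :=
  ∀ i : Fin d, edgeCount S i = m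

/-- Embedding of `Q_d` into `Q_{d+1}` fixing the last coordinate to `0`. -/
def emb {d : ℕ} (t : Vtx d) : Vtx (d + 1) := Fin.snoc t 0

/-- Embedding of `Q_d` into `Q_{d+1}` followed by the reflection `⊕ e_1 ⊕ e_d`
(multiplication by `X_1 X_d`). -/
def embS {d : ℕ} (t : Vtx d) : Vtx (d + 1) := Fin.snoc t 0 + eV 0 + eV (Fin.last d)

/-- The recursively defined designs `G_m^d`:
`G_1^d = {0, e_1, …, e_d}`; for even `m`, `G_m^d = G_{m/2}^{d-1} ∪ (G_{m/2}^{d-1} ⊕ e_1 ⊕ e_d)`;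
for odd `m`, `G_m^d = G_{(m-1)/2}^{d-1} ∪ (G_{(m+1)/2}^{d-1} ⊕ e_1 ⊕ e_d)`. -/
def G : (d : ℕ) → ℕ → Finset (Vtx d)
  | 0, _ => ∅
  | _ + 1, 0 => ∅
  | d + 1, 1 => insert (0 : Vtx (d + 1)) (Finset.univ.image fun i : Fin (d + 1) => eV i)
  | d + 1, m + 2 =>
    if (m + 2) % 2 = 0 then
      ((G d ((m + 2) / 2)).image emb) ∪ ((G d ((m + 2) / 2)).image embS)
    else
      ((G d ((m + 2 - 1) / 2)).image emb) ∪ ((G d ((m + 2 + 1) / 2)).image embS)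

/-- `⟨P_A, X_1 P_B⟩`: the number of pairs `(a, b) ∈ A × B` with `a = b ⊕ e_1`. -/
def crossCount {d : ℕ} (hd : 1 ≤ d) (A B : Finset (Vtx d)) : ℕ :=
  ((A ×ˢ B).filter fun p => p.1 = p.2 + eV (⟨0, hd⟩ : Fin d)).card

lemma G_one (d : ℕ) : G (d+1) 1 = insert (0 : Vtx (d+1)) (Finset.univ.image fun i : Fin (d + 1) => eV i) := rfl

lemma G_even (d j : ℕ) (hj : 1 ≤ j) :
    G (d+1) (2*j) = ((G d j).image emb) ∪ ((G d j).image embS) := by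
  obtain ⟨j, rfl⟩ : ∃ j', j = j'+1 := ⟨j-1, by omega⟩
  have h1 : 2*(j+1) = (2*j) + 2 := by ring
  rw [h1, G]
  rw [if_pos (by omega)]
  have h2 : (2*j+2)/2 = j+1 := by omega
  rw [h2]

lemma G_odd (d j : ℕ) (hj : 1 ≤ j) :
    G (d+1) (2*j+1) = ((G d j).image emb) ∪ ((G d (j+1)).image embS) := by
  obtain ⟨j, rfl⟩ : ∃ j', j = j'+1 := ⟨j-1, by omega⟩
  have h1 : 2*(j+1)+1 = (2*j+1) + 2 := by ring
  rw [h1, G]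
  rw [if_neg (by omega)]
  have h2 : (2*j+1+2-1)/2 = j+1 := by omega
  have h3 : (2*j+1+2+1)/2 = j+2 := by omega
  rw [h2, h3]

lemma vadd_self {d : ℕ} (v : Vtx d) : v + v = 0 := by
  funext i
  have h : ∀ a : ZMod 2, a + a = 0 := by decide
  exact h (v i)

lemma eV_inj {d : ℕ} {i j : Fin d} (h : eV i = eV j) : i = j := by
  by_contra hne
  have h1 := congrFun h i
  simp [eV, Pi.single_apply, hne] at h1

lemma eV_ne_zero {d : ℕ} (i : Fin d) : eV i ≠ 0 := by
  intro h
  have h1 := congrFun h i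
  simp [eV, Pi.single_apply] at h1

lemma eV_add_eV_ne {d : ℕ} {i j k : Fin d} (h : i ≠ j) : eV i + eV j ≠ eV k := by
  intro hE
  have h1 := congrFun hE i
  have h2 := congrFun hE j
  simp only [eV, Pi.add_apply, Pi.single_apply, if_pos rfl, if_neg h.symm, if_neg h] at h1 h2
  by_cases hik : i = k <;> by_cases hjk : j = k
  · exact h (hik.trans hjk.symm)
  · simp [hik, hjk] at h1 h2
  · simp [hik, hjk] at h1 h2
  · simp [hik, hjk] at h1 h2

lemma crossCount_eq {d : ℕ} (hd : 1 ≤ d) (A B : Finset (Vtx d)) :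
    crossCount hd A B = (B.filter fun b => b + eV (⟨0, hd⟩ : Fin d) ∈ A).card := by
  unfold crossCount
  apply Finset.card_bij (fun p _ => p.2)
  · intro p hp
    simp only [Finset.mem_filter, Finset.mem_product] at hp ⊢
    obtain ⟨⟨hA, hB⟩, he⟩ := hp
    exact ⟨hB, by rwa [← he]⟩
  · intro p hp q hq hpq
    simp only [Finset.mem_filter, Finset.mem_product] at hp hq
    exact Prod.ext (by rw [hp.2, hq.2, hpq]) hpq
  · intro b hb
    simp only [Finset.mem_filter] at hb
    exact ⟨(b + eV ⟨0, hd⟩, b), by simp [Finset.mem_filter, Finset.mem_product, hb.1, hb.2], rfl⟩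

lemma crossCount_le {d : ℕ} (hd : 1 ≤ d) (A B : Finset (Vtx d)) :
    crossCount hd A B ≤ B.card := by
  rw [crossCount_eq]
  exact Finset.card_filter_le _ _

lemma emb_injective {d : ℕ} : Function.Injective (emb (d := d)) := by
  intro a b h
  funext i
  have h1 := congrFun h (Fin.castSucc i)
  simpa [emb, Fin.snoc_castSucc] using h1

lemma embS_eq {d : ℕ} (t : Vtx d) : embS t = emb t + eV 0 + eV (Fin.last d) := rfl

lemma embS_injective {d : ℕ} : Function.Injective (embS (d := d)) := by
  intro a b h
  apply emb_injective
  rw [embS_eq, embS_eq] at h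
  have h2 := add_right_cancel h
  exact add_right_cancel h2

lemma emb_apply_last {d : ℕ} (t : Vtx d) : emb t (Fin.last d) = 0 := by
  simp [emb]

lemma embS_apply_last {d : ℕ} (t : Vtx (d+1)) : embS t (Fin.last (d+1)) = 1 := by
  have h1 : (Fin.last (d+1)) ≠ (0 : Fin (d+2)) := by
    simp [Fin.ext_iff]
  simp [embS, eV, Pi.single_apply, h1]

lemma emb_ne_embS {d : ℕ} (s t : Vtx (d+1)) : emb s ≠ embS t := by
  intro h
  have h1 := congrFun h (Fin.last (d+1))
  rw [emb_apply_last, embS_apply_last] at h1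
  exact (by decide : (0 : ZMod 2) ≠ 1) h1

lemma emb_zero {d : ℕ} : emb (0 : Vtx d) = 0 := by
  funext i
  induction i using Fin.lastCases with
  | last => simp [emb]
  | cast j => simp [emb, Fin.snoc_castSucc]

lemma emb_eV {d : ℕ} (j : Fin d) : emb (eV j) = eV (Fin.castSucc j) := by
  funext i
  induction i using Fin.lastCases with
  | last =>
    have : Fin.last d ≠ Fin.castSucc j := by
      simp [Fin.ext_iff]; omega
    simp [emb, eV, Pi.single_apply, this]
  | cast i =>
    by_cases h : i = j <;>
      simp [emb, Fin.snoc_castSucc, eV, Pi.single_apply, h, Fin.castSucc_inj]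

lemma eV0_eq {d : ℕ} : (0 : Fin (d+2)) = Fin.castSucc (⟨0, Nat.succ_pos d⟩ : Fin (d+1)) := by
  simp [Fin.ext_iff]

lemma emb_add_eV {d : ℕ} (t : Vtx (d+1)) :
    emb t + eV (⟨0, Nat.succ_pos (d+1)⟩ : Fin (d+2)) = emb (t + eV (⟨0, Nat.succ_pos d⟩ : Fin (d+1))) := by
  funext i
  induction i using Fin.lastCases with
  | last =>
    have h1 : Fin.last (d+1) ≠ (⟨0, Nat.succ_pos (d+1)⟩ : Fin (d+2)) := by simp [Fin.ext_iff]
    simp [emb, eV, Pi.single_apply, h1]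
  | cast j =>
    simp only [emb, Pi.add_apply, Fin.snoc_castSucc, eV, Pi.single_apply]
    by_cases h : (j : ℕ) = 0 <;> simp [Fin.ext_iff, h]

lemma embS_add_eV {d : ℕ} (t : Vtx (d+1)) :
    embS t + eV (⟨0, Nat.succ_pos (d+1)⟩ : Fin (d+2)) = embS (t + eV (⟨0, Nat.succ_pos d⟩ : Fin (d+1))) := by
  rw [embS_eq, embS_eq, ← emb_add_eV]
  abel

lemma emb_mem_union {d : ℕ} (A₁ A₂ : Finset (Vtx (d+1))) (y : Vtx (d+1)) :
    emb y ∈ (A₁.image emb ∪ A₂.image embS) ↔ y ∈ A₁ := by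
  simp only [Finset.mem_union, Finset.mem_image]
  constructor
  · rintro (⟨t, ht, hte⟩ | ⟨t, ht, hte⟩)
    · rwa [← emb_injective hte]
    · exact absurd hte.symm (emb_ne_embS y t)
  · intro hy; exact Or.inl ⟨y, hy, rfl⟩

lemma embS_mem_union {d : ℕ} (A₁ A₂ : Finset (Vtx (d+1))) (y : Vtx (d+1)) :
    embS y ∈ (A₁.image emb ∪ A₂.image embS) ↔ y ∈ A₂ := by
  simp only [Finset.mem_union, Finset.mem_image]
  constructor
  · rintro (⟨t, ht, hte⟩ | ⟨t, ht, hte⟩)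
    · exact absurd hte (emb_ne_embS t y)
    · rwa [← embS_injective hte]
  · intro hy; exact Or.inr ⟨y, hy, rfl⟩

lemma images_disjoint {d : ℕ} (A₁ A₂ : Finset (Vtx (d+1))) :
    Disjoint (A₁.image emb) (A₂.image embS) := by
  rw [Finset.disjoint_left]
  intro x hx1 hx2
  simp only [Finset.mem_image] at hx1 hx2
  obtain ⟨s, _, hs⟩ := hx1
  obtain ⟨t, _, ht⟩ := hx2
  exact emb_ne_embS s t (hs.trans ht.symm)

lemma cross_split {d : ℕ} (A₁ A₂ B₁ B₂ : Finset (Vtx (d+1))) (hD : 1 ≤ d+2) (hd : 1 ≤ d+1) :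
    crossCount hD ((A₁.image emb) ∪ (A₂.image embS)) ((B₁.image emb) ∪ (B₂.image embS))
      = crossCount hd A₁ B₁ + crossCount hd A₂ B₂ := by
  rw [crossCount_eq, crossCount_eq, crossCount_eq, Finset.filter_union,
    Finset.card_union_of_disjoint
      (Finset.disjoint_filter_filter (images_disjoint B₁ B₂))]
  congr 1
  · rw [Finset.filter_image, Finset.card_image_of_injective _ emb_injective]
    congr 1
    apply Finset.filter_congr
    intro x _
    rw [show (⟨0, hD⟩ : Fin (d+2)) = ⟨0, Nat.succ_pos (d+1)⟩ from rfl, emb_add_eV,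
      emb_mem_union]
  · rw [Finset.filter_image, Finset.card_image_of_injective _ embS_injective]
    congr 1
    apply Finset.filter_congr
    intro x _
    rw [show (⟨0, hD⟩ : Fin (d+2)) = ⟨0, Nat.succ_pos (d+1)⟩ from rfl, embS_add_eV,
      embS_mem_union]

lemma self_base (d : ℕ) (hd : 1 ≤ d + 1) :
    crossCount hd (G (d+1) 1) (G (d+1) 1) = 2 := by
  rw [crossCount_eq, G_one]
  have hset : Finset.filter
      (fun b => b + eV (⟨0, hd⟩ : Fin (d+1)) ∈ insert 0 (Finset.univ.image fun i : Fin (d+1) => eV i))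
      (insert 0 (Finset.univ.image fun i : Fin (d+1) => eV i))
      = {0, eV (⟨0, hd⟩ : Fin (d+1))} := by
    ext x
    simp only [Finset.mem_filter, Finset.mem_insert, Finset.mem_image, Finset.mem_univ,
      true_and, Finset.mem_singleton]
    constructor
    · rintro ⟨rfl | ⟨i, rfl⟩, h2⟩
      · exact Or.inl rfl
      · right
        rcases h2 with h0 | ⟨j, hj⟩
        · rw [← zero_add (eV (⟨0, hd⟩ : Fin (d+1))), ← h0, add_assoc, vadd_self, add_zero]
        · rcases eq_or_ne i (⟨0, hd⟩ : Fin (d+1)) with rfl | hne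
          · rfl
          · exact absurd hj.symm (eV_add_eV_ne hne)
    · rintro (rfl | rfl)
      · exact ⟨Or.inl rfl, Or.inr ⟨⟨0, hd⟩, by rw [zero_add]⟩⟩
      · exact ⟨Or.inr ⟨⟨0, hd⟩, rfl⟩, Or.inl (vadd_self _)⟩
  rw [hset, Finset.card_insert_of_notMem, Finset.card_singleton]
  simp only [Finset.mem_singleton]
  exact fun hc => eV_ne_zero _ hc.symm

lemma emb_mem_G_one {d : ℕ} (y : Vtx (d+1)) : emb y ∈ G (d+2) 1 ↔ y ∈ G (d+1) 1 := by
  rw [G_one, G_one]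
  simp only [Finset.mem_insert, Finset.mem_image, Finset.mem_univ, true_and]
  constructor
  · rintro (h0 | ⟨i, hi⟩)
    · left; exact emb_injective (by rw [h0, emb_zero])
    · induction i using Fin.lastCases with
      | last =>
        have h1 := congrFun hi (Fin.last (d+1))
        rw [emb_apply_last] at h1
        simp [eV, Pi.single_apply] at h1
      | cast j =>
        right
        exact ⟨j, emb_injective (by rw [emb_eV, hi])⟩
  · rintro (rfl | ⟨i, rfl⟩)
    · left; exact emb_zero
    · right; exact ⟨Fin.castSucc i, (emb_eV i).symm⟩

lemma embS_mem_G_one {d : ℕ} (y : Vtx (d+1)) :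
    embS y ∈ G (d+2) 1 ↔ y = eV (⟨0, Nat.succ_pos d⟩ : Fin (d+1)) := by
  rw [G_one]
  simp only [Finset.mem_insert, Finset.mem_image, Finset.mem_univ, true_and]
  constructor
  · rintro (h0 | ⟨i, hi⟩)
    · have h1 := congrFun h0 (Fin.last (d+1))
      rw [embS_apply_last] at h1
      simp at h1
    · -- eV i = embS y, so i = last, and y = eV 0
      have hlast : i = Fin.last (d+1) := by
        by_contra hne
        have h1 := congrFun hi (Fin.last (d+1))
        rw [embS_apply_last] at h1
        simp [eV, Pi.single_apply, Ne.symm hne] at h1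
      subst hlast
      -- eV (last) = embS y = emb y + eV 0 + eV last
      apply emb_injective
      rw [emb_eV, ← eV0_eq]
      have := hi.symm
      rw [embS_eq] at this
      -- this : emb y + eV 0 + eV last = eV last
      have h2 : emb y + eV 0 = 0 := by
        have h3 := congrArg (fun w => w + eV (Fin.last (d+1))) this
        simpa [add_assoc, vadd_self] using h3
      have h4 : emb y = eV (0 : Fin (d+2)) := by
        have h3 := congrArg (fun w => w + eV (0 : Fin (d+2))) h2
        simpa [add_assoc, vadd_self] using h3
      exact h4
  · rintro rfl
    right
    refine ⟨Fin.last (d+1), ?_⟩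
    rw [embS_eq, emb_eV, ← eV0_eq, vadd_self, zero_add]

lemma base2 (d : ℕ) (hd : 1 ≤ d + 2) :
    crossCount hd (G (d+2) 1) (G (d+2) 2) = 3 := by
  have hG2 : G (d+2) 2 = ((G (d+1) 1).image emb) ∪ ((G (d+1) 1).image embS) := by
    have h := G_even (d+1) 1 le_rfl
    norm_num at h
    exact h
  rw [crossCount_eq, hG2, Finset.filter_union,
    Finset.card_union_of_disjoint (Finset.disjoint_filter_filter (images_disjoint _ _)),
    Finset.filter_image, Finset.filter_image,
    Finset.card_image_of_injective _ emb_injective,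
    Finset.card_image_of_injective _ embS_injective]
  have e1 : (Finset.filter (fun x => emb x + eV (⟨0, hd⟩ : Fin (d+2)) ∈ G (d+2) 1) (G (d+1) 1)).card = 2 := by
    have hc : ∀ x ∈ G (d+1) 1, (emb x + eV (⟨0, hd⟩ : Fin (d+2)) ∈ G (d+2) 1)
        ↔ (x + eV (⟨0, Nat.succ_pos d⟩ : Fin (d+1)) ∈ G (d+1) 1) := by
      intro x _
      rw [show (⟨0, hd⟩ : Fin (d+2)) = ⟨0, Nat.succ_pos (d+1)⟩ from rfl, emb_add_eV,
        emb_mem_G_one]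
    rw [Finset.filter_congr hc, ← crossCount_eq (Nat.succ_pos d)]
    exact self_base d (Nat.succ_pos d)
  have e2 : (Finset.filter (fun x => embS x + eV (⟨0, hd⟩ : Fin (d+2)) ∈ G (d+2) 1) (G (d+1) 1)).card = 1 := by
    have hc : ∀ x ∈ G (d+1) 1, (embS x + eV (⟨0, hd⟩ : Fin (d+2)) ∈ G (d+2) 1) ↔ (x = 0) := by
      intro x _
      rw [show (⟨0, hd⟩ : Fin (d+2)) = ⟨0, Nat.succ_pos (d+1)⟩ from rfl, embS_add_eV,
        embS_mem_G_one]
      constructor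
      · intro hxe
        have h3 := congrArg (fun w => w + eV (⟨0, Nat.succ_pos d⟩ : Fin (d+1))) hxe
        simpa [add_assoc, vadd_self] using h3
      · rintro rfl; rw [zero_add]
    rw [Finset.filter_congr hc, Finset.filter_eq', if_pos]
    · exact Finset.card_singleton _
    · rw [G_one]; exact Finset.mem_insert_self _ _
  rw [e1, e2]

lemma selfCross : ∀ d m, 1 ≤ m → 2*m ≤ 2^(d+1) → ∀ hd : 1 ≤ d+1,
    crossCount hd (G (d+1) m) (G (d+1) m) = 2*m := by
  intro d
  induction d with
  | zero =>
    intro m h1 h2 hd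
    have hm : m = 1 := by norm_num at h2; omega
    subst hm
    exact self_base 0 hd
  | succ d ih =>
    intro m h1 h2 hd
    rcases Nat.lt_or_ge m 2 with hm | hm
    · have hm1 : m = 1 := by omega
      subst hm1
      exact self_base (d+1) hd
    · have hpow : 2^(d+2) = 2*2^(d+1) := by ring
      have hpow2 : 2^(d+1) = 2*2^d := by ring
      rcases Nat.even_or_odd m with ⟨j, hj⟩ | ⟨j, hj⟩
      · obtain rfl : m = 2*j := by omega
        have hj1 : 1 ≤ j := by omega
        rw [G_even (d+1) j hj1, cross_split _ _ _ _ hd (Nat.succ_pos d)]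
        rw [ih j hj1 (by omega) (Nat.succ_pos d)]
        omega
      · obtain rfl : m = 2*j+1 := by omega
        have hj1 : 1 ≤ j := by omega
        rw [G_odd (d+1) j hj1, cross_split _ _ _ _ hd (Nat.succ_pos d)]
        rw [ih j hj1 (by omega) (Nat.succ_pos d), ih (j+1) (by omega) (by omega) (Nat.succ_pos d)]
        omega

lemma crossG : ∀ d m, 1 ≤ m → 2*(m+1) ≤ 2^(d+1) → ∀ hd : 1 ≤ d+1,
    crossCount hd (G (d+1) m) (G (d+1) (m+1)) = 2*m+1 := by
  intro d
  induction d with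
  | zero =>
    intro m h1 h2 hd
    norm_num at h2
    omega
  | succ d ih =>
    intro m h1 h2 hd
    have hpow : 2^(d+2) = 2*2^(d+1) := by ring
    have hpow2 : 2^(d+1) = 2*2^d := by ring
    rcases Nat.lt_or_ge m 2 with hm | hm
    · have hm1 : m = 1 := by omega
      subst hm1
      exact base2 d hd
    · rcases Nat.even_or_odd m with ⟨j, hj⟩ | ⟨j, hj⟩
      · obtain rfl : m = 2*j := by omega
        have hj1 : 1 ≤ j := by omega
        rw [show 2*j+1 = 2*j+1 from rfl, G_even (d+1) j hj1, G_odd (d+1) j hj1,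
          cross_split _ _ _ _ hd (Nat.succ_pos d)]
        rw [selfCross d j hj1 (by omega) (Nat.succ_pos d), ih j hj1 (by omega) (Nat.succ_pos d)]
        omega
      · obtain rfl : m = 2*j+1 := by omega
        have hj1 : 1 ≤ j := by omega
        rw [G_odd (d+1) j hj1, show 2*j+1+1 = 2*(j+1) from by ring, G_even (d+1) (j+1) (by omega),
          cross_split _ _ _ _ hd (Nat.succ_pos d)]
        rw [ih j hj1 (by omega) (Nat.succ_pos d),
          selfCross d (j+1) (by omega) (by omega) (Nat.succ_pos d)]
        omega

theorem stmt19 (d k : ℕ) (hd : 1 ≤ d) (hk : 1 ≤ k)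
    (h : crossCount hd (G d k) (G d (k + 1)) = 2 * k + 1) :
    crossCount (by omega : 1 ≤ d + 1) (G (d + 1) (2 * k)) (G (d + 1) (2 * k + 1))
        = 4 * k + 1 ∧
      crossCount (by omega : 1 ≤ d + 1) (G (d + 1) (2 * k - 1)) (G (d + 1) (2 * k))
        = 4 * k - 1 := by
  obtain ⟨d, rfl⟩ : ∃ d', d = d'+1 := ⟨d-1, by omega⟩
  have hcard : (G (d+1) (k+1)).card ≤ 2^(d+1) := by
    refine le_trans (Finset.card_le_univ _) ?_
    have : Fintype.card (Vtx (d+1)) = 2^(d+1) := by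
      rw [show Fintype.card (Vtx (d+1)) = Fintype.card (ZMod 2) ^ Fintype.card (Fin (d+1)) from
        Fintype.card_fun]
      simp
    omega
  have hle : 2*k+1 ≤ 2^(d+1) := by
    rw [← h]
    exact le_trans (crossCount_le hd _ _) hcard
  have hpow : 2^(d+1) = 2*2^d := by ring
  have hpow2 : 2^(d+2) = 2*2^(d+1) := by ring
  constructor
  · have hr := crossG (d+1) (2*k) (by omega) (by omega) (by omega)
    rw [show 2*(2*k)+1 = 4*k+1 from by ring] at hr
    exact hr
  · have hr := crossG (d+1) (2*k-1) (by omega) (by omega) (by omega)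
    rw [show (2*k-1)+1 = 2*k from by omega, show 2*(2*k-1)+1 = 4*k-1 from by omega] at hr
    exact hr
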